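/- Let b(x) = 1/(1+2x)^2 and let U be Wirsing's operator (Ug)(x) = Σ_{k=1}^∞ [ k/(k+1+x)^2 ∫_{1/(k+1+x)}^{1/(k+x)} g(y) dy + (1+x)/((k+x)^3 (k+1+x)) g(1/(k+x)) ]. Then (Ub)(x) = 1/(2(2+x)^2) for all x ∈ [0,1]. -/

import Mathlib

open MeasureTheory Filter Set

/-- The Gauss map `x ↦ 1/x - ⌊1/x⌋` (sending `0` to `0`). -/
noncomputable def gaussMap (x : ℝ) : ℝ := Int.fract x⁻¹

/-- The Gauss measure `μ(B) = (1/log 2) ∫_B dx/(1+x)` on `[0,1)`. -/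
noncomputable def gaussMeasure : Measure ℝ :=
  (volume.restrict (Set.Ico (0:ℝ) 1)).withDensity
    (fun x => ENNReal.ofReal (1 / ((1 + x) * Real.log 2)))

/-- The `n`-th continued fraction digit `a_{n+1}` of `x`. -/
noncomputable def cfDigit (x : ℝ) (n : ℕ) : ℤ := ⌊(gaussMap^[n] x)⁻¹⌋

/-- The cylinder set of points of `[0,1)` whose continued fraction expansion starts with `s`. -/
noncomputable def cylinder (s : List ℕ+) : Set ℝ :=
  {x ∈ Set.Ico (0:ℝ) 1 | ∀ i (h : i < s.length), cfDigit x i = (s.get ⟨i, h⟩ : ℕ)}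

/-- A point of `[0,1)` is CF-normal if every finite string of positive integers occurs among
its continued fraction digits with limiting frequency equal to the Gauss measure of the
corresponding cylinder set. -/
noncomputable def CFNormal (x : ℝ) : Prop :=
  ∀ s : List ℕ+, s ≠ [] →
    Filter.Tendsto
      (fun n : ℕ => (Nat.card {i : ℕ | i ≤ n ∧ gaussMap^[i] x ∈ cylinder s} : ℝ) / n)
      Filter.atTop (nhds (gaussMeasure (cylinder s)).toReal)

/-- The Gauss–Kuzmin transfer operator. -/
noncomputable def transferOp (f : ℝ → ℝ) (x : ℝ) : ℝ :=
  ∑' k : ℕ, (1 + x) / (((k:ℝ) + 1 + x) * ((k:ℝ) + 2 + x)) * f (1 / ((k:ℝ) + 1 + x))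

/-- Wirsing's operator. -/
noncomputable def wirsingOp (g : ℝ → ℝ) (x : ℝ) : ℝ :=
  ∑' k : ℕ,
    (((k:ℝ) + 1) / (((k:ℝ) + 2 + x) ^ 2) *
        (∫ y in (1 / ((k:ℝ) + 2 + x))..(1 / ((k:ℝ) + 1 + x)), g y) +
      (1 + x) / (((k:ℝ) + 1 + x) ^ 3 * ((k:ℝ) + 2 + x)) * g (1 / ((k:ℝ) + 1 + x)))

/-!
The primitive of `b` is `-1/(2(1+2y))`, so the `k`-th summand of `(U b)(x)` is a rational function
of `k` and `x`. It telescopes: it equals `F x k - F x (k+1)` for an explicit rational `F`, and `F x k → 0` as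
`k → ∞`, so `(U b)(x) = F x 0 = 1/(2(2+x)^2)`.
-/

open Topology

theorem hasSum_sub_succ_of_antitone {f : ℕ → ℝ} {l : ℝ} (hf : Antitone f)
    (hl : Tendsto f atTop (𝓝 l)) : HasSum (fun n => f n - f (n + 1)) (f 0 - l) := by
  rw [hasSum_iff_tendsto_nat_of_nonneg fun n => sub_nonneg.2 (hf n.le_succ)]
  simp_rw [Finset.sum_range_sub']
  exact tendsto_const_nhds.sub hl

theorem integral_one_div_one_add_two_mul_sq {p q : ℝ} (hp : 0 < p) (hq : 0 < q) :
    ∫ y in p..q, 1 / (1 + 2 * y) ^ 2 = 1 / (2 * (1 + 2 * p)) - 1 / (2 * (1 + 2 * q)) := by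
  have hpos : ∀ y ∈ uIcc p q, 0 < 1 + 2 * y := by
    intro y hy
    rcases mem_uIcc.1 hy with ⟨hpy, -⟩ | ⟨hqy, -⟩ <;> linarith
  have hderiv : ∀ y ∈ uIcc p q,
      HasDerivAt (fun y : ℝ => -(2 * (1 + 2 * y))⁻¹) (1 / (1 + 2 * y) ^ 2) y := by
    intro y hy
    have hne : 2 * (1 + 2 * y) ≠ 0 := by linarith [hpos y hy]
    refine (((hasDerivAt_id' y).const_mul 2 |>.const_add 1 |>.const_mul 2).inv hne).neg
      |>.congr_deriv ?_
    field_simp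
  have hint : IntervalIntegrable (fun y : ℝ => 1 / (1 + 2 * y) ^ 2) volume p q :=
    (continuousOn_const.div (by fun_prop) fun y hy => pow_ne_zero 2 (hpos y hy).ne')
      |>.intervalIntegrable
  rw [intervalIntegral.integral_eq_sub_of_hasDerivAt hderiv hint]
  simp only [one_div]
  ring

noncomputable def wirsingSummand (g : ℝ → ℝ) (x : ℝ) (k : ℕ) : ℝ :=
  ((k : ℝ) + 1) / ((k : ℝ) + 2 + x) ^ 2 *
      (∫ y in (1 / ((k : ℝ) + 2 + x))..(1 / ((k : ℝ) + 1 + x)), g y) +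
    (1 + x) / (((k : ℝ) + 1 + x) ^ 3 * ((k : ℝ) + 2 + x)) * g (1 / ((k : ℝ) + 1 + x))

theorem wirsingOp_eq_tsum (g : ℝ → ℝ) (x : ℝ) : wirsingOp g x = ∑' k, wirsingSummand g x k :=
  rfl

theorem wirsingSummand_nonneg {g : ℝ → ℝ} (hg : ∀ y, 0 < y → 0 ≤ g y) {x : ℝ} (hx : -1 < x)
    (k : ℕ) : 0 ≤ wirsingSummand g x k := by
  have hk : (0 : ℝ) ≤ k := k.cast_nonneg
  have h1 : 0 < (k : ℝ) + 1 + x := by linarith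
  have h2 : 0 < (k : ℝ) + 2 + x := by linarith
  have hint : 0 ≤ ∫ y in (1 / ((k : ℝ) + 2 + x))..(1 / ((k : ℝ) + 1 + x)), g y :=
    intervalIntegral.integral_nonneg (one_div_le_one_div_of_le h1 (by linarith))
      fun y hy => hg y (lt_of_lt_of_le (by positivity) hy.1)
  have hx' : 0 ≤ 1 + x := by linarith
  have hg1 := hg _ (one_div_pos.2 h1)
  rw [wirsingSummand]
  positivity

/-- The tail `∑_{j ≥ k}` of the series defining `(U b)(x)`. -/
noncomputable def wirsingTail (x : ℝ) (k : ℕ) : ℝ :=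
  ((k + 1 + x) ^ 2 + (k + 1 + x) + 1 + x) / (2 * (k + 1 + x) * (k + 2 + x) ^ 2 * (k + 3 + x))

section

variable {x : ℝ}

theorem wirsingTail_zero (hx : -1 < x) : wirsingTail x 0 = 1 / (2 * (2 + x) ^ 2) := by
  have h1 : 0 < 1 + x := by linarith
  have h3 : 0 < 3 + x := by linarith
  rw [wirsingTail, Nat.cast_zero]
  simp only [zero_add]
  field_simp
  ring

theorem wirsingSummand_b (hx : -1 < x) (k : ℕ) :
    wirsingSummand (fun y => 1 / (1 + 2 * y) ^ 2) x k
      = wirsingTail x k - wirsingTail x (k + 1) := by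
  have hk : (0 : ℝ) ≤ k := k.cast_nonneg
  have h1 : 0 < (k : ℝ) + 1 + x := by linarith
  have h2 : 0 < (k : ℝ) + 2 + x := by linarith
  have h3 : 0 < (k : ℝ) + 3 + x := by linarith
  have h4 : 0 < (k : ℝ) + 4 + x := by linarith
  have hb : ∀ t : ℝ, 0 < t → 1 + 2 * (1 / t) = (t + 2) / t := fun t ht => by
    field_simp
  have hsucc : wirsingTail x (k + 1) = ((k + 2 + x) ^ 2 + (k + 2 + x) + 1 + x) /
      (2 * (k + 2 + x) * (k + 3 + x) ^ 2 * (k + 4 + x)) := by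
    rw [wirsingTail]
    push_cast
    ring_nf
  rw [wirsingSummand, integral_one_div_one_add_two_mul_sq (by positivity) (by positivity),
    hb _ h1, hb _ h2, hsucc, wirsingTail]
  field_simp
  ring

theorem antitone_wirsingTail (hx : -1 < x) : Antitone (wirsingTail x) :=
  antitone_nat_of_succ_le fun k =>
    sub_nonneg.1 <| wirsingSummand_b hx k ▸ wirsingSummand_nonneg (fun y _ => by positivity) hx k

theorem wirsingTail_nonneg (hx : -1 < x) (k : ℕ) : 0 ≤ wirsingTail x k := by
  have hk : (0 : ℝ) ≤ k := k.cast_nonneg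
  have h1 : 0 < (k : ℝ) + 1 + x := by linarith
  have h3 : 0 < (k : ℝ) + 3 + x := by linarith
  unfold wirsingTail
  exact div_nonneg (by nlinarith) (by positivity)

theorem wirsingTail_le (hx : -1 < x) (k : ℕ) : wirsingTail x k ≤ 1 / (k + 1) := by
  have hk : (0 : ℝ) ≤ k := k.cast_nonneg
  set t : ℝ := k + 1 + x with ht
  have h1 : 0 < t := by linarith
  have hnum : t ^ 2 + t + 1 + x ≤ t * (t + 2) := by linarith
  calc wirsingTail x k ≤ t * (t + 2) / (2 * t * (t + 1) ^ 2 * (t + 2)) := by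
        rw [wirsingTail, ← ht, show (k : ℝ) + 2 + x = t + 1 by ring,
          show (k : ℝ) + 3 + x = t + 2 by ring]
        gcongr
    _ = 1 / (2 * (t + 1) ^ 2) := by field_simp
    _ ≤ 1 / (k + 1) := by
        gcongr
        nlinarith

theorem tendsto_wirsingTail (hx : -1 < x) : Tendsto (wirsingTail x) atTop (𝓝 0) :=
  squeeze_zero (wirsingTail_nonneg hx) (wirsingTail_le hx) tendsto_one_div_add_atTop_nhds_zero_nat

end

theorem wirsingOp_b (x : ℝ) (hx : x ∈ Set.Icc (0:ℝ) 1) :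
    wirsingOp (fun y => 1 / (1 + 2*y)^2) x = 1 / (2 * (2 + x)^2) := by
  have hx' : -1 < x := by linarith [hx.1]
  have hsum := hasSum_sub_succ_of_antitone (antitone_wirsingTail hx') (tendsto_wirsingTail hx')
  rw [sub_zero, wirsingTail_zero hx', ← funext (wirsingSummand_b hx')] at hsum
  rw [wirsingOp_eq_tsum]
  exact hsum.tsum_eq
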